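/- arXiv:1512.09303 — 2 statements merged into one kernel-verified Lean document; each statement's English description precedes it below -/
import Mathlib

section
/- Let X be a nonempty compact Hausdorff space and E a commutative semisimple Banach algebra with unit. Then C(X,E) is semisimple, and every character of C(X,E) is of the form ψ∘e_x for some x ∈ X and ψ ∈ M(E), where e_x denotes evaluation at x; that is, the map β : X × M(E) → M(C(X,E)), (x,ψ) ↦ ψ∘e_x, is a bijection. -/
open WeakDual

/-- For a commutative Banach algebra `A` (over `ℂ`) and a character `φ`, `Jset A φ` is the ideal
`J_φ` of elements whose Gelfand transform vanishes on a neighbourhood of `φ` in the character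
space `M(A)` (with the weak-star topology). -/
def Jset (A : Type*) [NormedCommRing A] [NormedAlgebra ℂ A]
    (φ : characterSpace ℂ A) : Set A :=
  {a : A | ∀ᶠ χ in nhds φ, χ a = 0}

/-- `A` is a Ditkin algebra: for every character `φ` and every `a` with `â(φ) = 0`
(i.e. `a ∈ I_φ`), `a` lies in the closure of `a • J_φ`. -/
def IsDitkinAlgebra (A : Type*) [NormedCommRing A] [NormedAlgebra ℂ A] : Prop :=
  ∀ (φ : characterSpace ℂ A) (a : A), φ a = 0 → a ∈ closure ((a * ·) '' Jset A φ)

/-- `A` has bounded relative units: for every character `φ` there is `m > 0` such that for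
every compact `K ⊆ M(A) \ {φ}` there is `a ∈ J_φ` with `â = 1` on `K` and `‖a‖ ≤ m`. -/
def HasBoundedRelativeUnits (A : Type*) [NormedCommRing A] [NormedAlgebra ℂ A] : Prop :=
  ∀ φ : characterSpace ℂ A, ∃ m : ℝ, 0 < m ∧
    ∀ K : Set (characterSpace ℂ A), IsCompact K → φ ∉ K →
      ∃ a ∈ Jset A φ, (∀ χ ∈ K, χ a = 1) ∧ ‖a‖ ≤ m

/-- `A` is a strong Ditkin algebra: for each character `φ`, the maximal ideal
`I_φ = {a | â(φ) = 0}` has a bounded approximate identity contained in `J_φ`. -/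
def IsStrongDitkinAlgebra (A : Type*) [NormedCommRing A] [NormedAlgebra ℂ A] : Prop :=
  ∀ φ : characterSpace ℂ A, ∃ m : ℝ, 0 < m ∧ ∃ u : ℕ → A,
    (∀ n, u n ∈ Jset A φ ∧ ‖u n‖ ≤ m) ∧
    ∀ a : A, φ a = 0 →
      Filter.Tendsto (fun n => ‖a - a * u n‖) Filter.atTop (nhds 0)

/-- `A` is semisimple: the Gelfand transform is injective, i.e. an element annihilated by all
characters is zero. -/
def IsSemisimple (A : Type*) [NormedCommRing A] [NormedAlgebra ℂ A] : Prop :=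
  ∀ a : A, (∀ φ : characterSpace ℂ A, φ a = 0) → a = 0

/-- An admissible quadruple `(X, E, B, B̃)`: `X` is a compact Hausdorff space, `E` a commutative
unital Banach algebra, `B` a natural `ℂ`-valued function algebra on `X` (realised by an injective
unital algebra embedding `incB : B →ₐ[ℂ] C(X, ℂ)` with continuous point evaluations, separating
points, and every character of `B` given by evaluation at a point of `X`), `B̃` an `E`-valued
function algebra on `X` (realised via `incT : B̃ →ₐ[ℂ] C(X, E)`; note that the constant
function `1_E` is automatically in the image, being the image of `1`), such that
`B·E ⊆ B̃` and `{λ ∘ f : f ∈ B̃, λ ∈ M(E)} ⊆ B`. -/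
structure AdmissibleQuadruple
    (X : Type*) [TopologicalSpace X] [CompactSpace X] [T2Space X]
    (E : Type*) [NormedCommRing E] [NormedAlgebra ℂ E] [CompleteSpace E]
    (B : Type*) [NormedCommRing B] [NormedAlgebra ℂ B] [CompleteSpace B]
    (Bt : Type*) [NormedCommRing Bt] [NormedAlgebra ℂ Bt] [CompleteSpace Bt] where
  incB : B →ₐ[ℂ] C(X, ℂ)
  incB_injective : Function.Injective incB
  incB_eval_continuous : ∀ x : X, Continuous fun g : B => incB g x
  incB_separates : ∀ x y : X, x ≠ y → ∃ g : B, incB g x ≠ incB g y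
  natB : ∀ χ : characterSpace ℂ B, ∃ x : X, ∀ g : B, χ g = incB g x
  incT : Bt →ₐ[ℂ] C(X, E)
  incT_injective : Function.Injective incT
  incT_eval_continuous : ∀ x : X, Continuous fun f : Bt => incT f x
  incT_separates : ∀ x y : X, x ≠ y → ∃ f : Bt, incT f x ≠ incT f y
  smul_mem : ∀ (g : B) (a : E), ∃ f : Bt, ∀ x : X, incT f x = incB g x • a
  comp_mem : ∀ (ψ : characterSpace ℂ E) (f : Bt), ∃ g : B, ∀ x : X, incB g x = ψ (incT f x)

variable {X : Type*} [TopologicalSpace X] [CompactSpace X] [T2Space X]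
  {E : Type*} [NormedCommRing E] [NormedAlgebra ℂ E] [CompleteSpace E]
  {B : Type*} [NormedCommRing B] [NormedAlgebra ℂ B] [CompleteSpace B]
  {Bt : Type*} [NormedCommRing Bt] [NormedAlgebra ℂ Bt] [CompleteSpace Bt]

/-- An admissible quadruple is natural if the associated map
`β : X × M(E) → M(B̃)`, `(x, ψ) ↦ ψ ∘ e_x`, is bijective; equivalently, every character of `B̃`
has a unique representation `f ↦ ψ ((incT f) x)`. -/
def AdmissibleQuadruple.IsNatural (Q : AdmissibleQuadruple X E B Bt) : Prop :=
  ∀ φ : characterSpace ℂ Bt, ∃! p : X × characterSpace ℂ E,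
    ∀ f : Bt, φ f = p.2 (Q.incT f p.1)

/-- An admissible quadruple is tight if for each `f ∈ B̃` the `B`-valued map
`λ ↦ λ ∘ f` on `M(E)` is continuous (from the weak-star topology to the norm of `B`). -/
def AdmissibleQuadruple.IsTight (Q : AdmissibleQuadruple X E B Bt) : Prop :=
  ∀ f : Bt, ∃ h : C(characterSpace ℂ E, B),
    ∀ (ψ : characterSpace ℂ E) (x : X), Q.incB (h ψ) x = ψ (Q.incT f x)

/-!
A character `φ` of `C(X, E)` restricts to a character of the scalar functions `g ↦ g · 1`, a copy
of `C(X, ℂ)`, so by Gelfand duality for `C(X, ℂ)` it is evaluation at a unique point `x` there.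
If `f x = 0`, multiplying `f` by Urysohn bumps `g` with `g x = 1` supported where `f` is small
produces functions arbitrarily close to `0` on which `φ` takes the value `φ f`; by continuity
`φ f = 0`. Hence `φ f = φ (const (f x)) = ψ (f x)`, where `ψ` is `φ` restricted to the constants.
Semisimplicity is pointwise: the characters `ψ ∘ e_x` see every value `f x`, and the characters
of `E` separate its points.
-/

namespace WeakDual.CharacterSpace

variable {𝕜 A A' : Type*} [NontriviallyNormedField 𝕜] [NormedRing A] [CompleteSpace A]
  [NormedAlgebra 𝕜 A] [Semiring A'] [TopologicalSpace A'] [Algebra 𝕜 A']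

/-- Completeness of `A` makes the pulled-back character automatically continuous. -/
noncomputable def comap (h : A →ₐ[𝕜] A') (φ : characterSpace 𝕜 A') : characterSpace 𝕜 A :=
  equivAlgHom.symm ((toAlgHom φ).comp h)

@[simp]
lemma comap_apply (h : A →ₐ[𝕜] A') (φ : characterSpace 𝕜 A') (a : A) :
    comap h φ a = φ (h a) := rfl

end WeakDual.CharacterSpace

namespace ContinuousMap

variable (X E : Type*) [TopologicalSpace X] [NormedRing E] [NormedAlgebra ℂ E]

noncomputable def scalarAlgHom : C(X, ℂ) →ₐ[ℂ] C(X, E) :=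
  (Algebra.ofId ℂ E).compLeftContinuous ℂ (continuous_algebraMap ℂ E)

variable {X E}

@[simp]
lemma scalarAlgHom_apply (g : C(X, ℂ)) (x : X) :
    scalarAlgHom X E g x = algebraMap ℂ E (g x) := rfl

variable [CompactSpace X] [T2Space X]

lemma zero_mem_closure_scalarAlgHom_mul {f : C(X, E)} {x : X} (hf : f x = 0) :
    (0 : C(X, E)) ∈ closure ((scalarAlgHom X E · * f) '' {g | g x = 1}) := by
  refine Metric.mem_closure_iff.2 fun ε hε => ?_
  set U : Set X := {y | ‖f y‖ < ε / 2}
  have hU : IsOpen U := isOpen_lt (by fun_prop) continuous_const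
  have hxU : x ∈ U := by simp [U, hf, hε]
  obtain ⟨g, hg0, hg1, hg01⟩ := exists_continuous_zero_one_of_isClosed hU.isClosed_compl
    isClosed_singleton (Set.disjoint_singleton_right.2 fun h => h hxU)
  let g' : C(X, ℂ) := (Complex.ofRealCLM : C(ℝ, ℂ)).comp g
  have hbound : ∀ y, ‖g y‖ * ‖f y‖ ≤ ε / 2 := fun y => by
    by_cases hy : y ∈ U
    · have : ‖g y‖ ≤ 1 := by rw [Real.norm_of_nonneg (hg01 y).1]; exact (hg01 y).2
      exact (mul_le_of_le_one_left (norm_nonneg _) this).trans (le_of_lt hy)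
    · rw [hg0 hy, Pi.zero_apply, norm_zero, zero_mul]
      positivity
  refine ⟨_, ⟨g', by simp [g', hg1 rfl], rfl⟩, ?_⟩
  rw [dist_zero_left]
  refine ((ContinuousMap.norm_le _ (by positivity)).2 fun y => ?_).trans_lt (half_lt_self hε)
  simpa [g', ← Algebra.smul_def, norm_smul] using hbound y

end ContinuousMap

namespace WeakDual.CharacterSpace

open ContinuousMap

variable {X E : Type*} [TopologicalSpace X] [CompactSpace X] [T2Space X]
  [NormedRing E] [NormedAlgebra ℂ E]

lemma existsUnique_apply_scalarAlgHom_eq (φ : characterSpace ℂ C(X, E)) :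
    ∃! x : X, ∀ g : C(X, ℂ), φ (scalarAlgHom X E g) = g x := by
  simpa [CharacterSpace.ext_iff, eq_comm] using
    (continuousMapEval_bijective X ℂ).existsUnique (comap (scalarAlgHom X E) φ)

lemma apply_eq_zero_of_apply_scalarAlgHom_eq {φ : characterSpace ℂ C(X, E)} {x : X}
    (hx : ∀ g : C(X, ℂ), φ (scalarAlgHom X E g) = g x) {f : C(X, E)} (hf : f x = 0) :
    φ f = 0 := by
  have hS : (scalarAlgHom X E · * f) '' {g | g x = 1} ⊆ {u | φ u = φ f} := by
    rintro _ ⟨g, hg, rfl⟩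
    simp_all
  have h0 := closure_minimal hS (isClosed_eq (map_continuous φ) continuous_const)
    (zero_mem_closure_scalarAlgHom_mul hf)
  simpa [eq_comm] using h0

lemma apply_eq_apply_const_of_apply_scalarAlgHom_eq {φ : characterSpace ℂ C(X, E)} {x : X}
    (hx : ∀ g : C(X, ℂ), φ (scalarAlgHom X E g) = g x) (f : C(X, E)) :
    φ f = φ (const X (f x)) :=
  sub_eq_zero.1 <| by
    simpa using apply_eq_zero_of_apply_scalarAlgHom_eq hx (f := f - const X (f x)) (by simp)

end WeakDual.CharacterSpace

theorem hausner_semisimple_characters_general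
    (X : Type*) [TopologicalSpace X] [CompactSpace X] [T2Space X]
    (E : Type*) [NormedCommRing E] [NormedAlgebra ℂ E] [CompleteSpace E]
    (hE : IsSemisimple E) :
    IsSemisimple C(X, E) ∧
    (∀ (x : X) (ψ : characterSpace ℂ E), ∃ φ : characterSpace ℂ C(X, E),
        ∀ f : C(X, E), φ f = ψ (f x)) ∧
    (∀ φ : characterSpace ℂ C(X, E), ∃! p : X × characterSpace ℂ E,
        ∀ f : C(X, E), φ f = p.2 (f p.1)) := by
  refine ⟨fun f hf => ?_, fun x ψ => ?_, fun φ => ?_⟩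
  · ext x
    exact hE (f x) fun ψ => hf (CharacterSpace.comap (ContinuousMap.evalAlgHom ℂ E x) ψ)
  · exact ⟨CharacterSpace.comap (ContinuousMap.evalAlgHom ℂ E x) ψ, fun _ => rfl⟩
  obtain ⟨x, hx, hx_unique⟩ := CharacterSpace.existsUnique_apply_scalarAlgHom_eq φ
  let ψ := CharacterSpace.comap ((Algebra.ofId E C(X, E)).restrictScalars ℂ) φ
  refine ⟨(x, ψ), CharacterSpace.apply_eq_apply_const_of_apply_scalarAlgHom_eq hx, ?_⟩
  rintro ⟨y, ρ⟩ hρ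
  obtain rfl : y = x := hx_unique y fun g => by simp [hρ, AlgHomClass.commutes]
  congr
  ext a
  exact (hρ (ContinuousMap.const X a)).symm

/-- **Hausner.** For a nonempty compact Hausdorff `X` and a commutative
semisimple unital Banach algebra `E`, the algebra `C(X, E)` is semisimple; moreover every
`ψ ∘ e_x` is a character of `C(X, E)` and every character of `C(X, E)` is of this form for a
unique pair `(x, ψ) ∈ X × M(E)`, i.e. `β : X × M(E) → M(C(X, E))` is a bijection. -/
theorem hausner_semisimple_characters
    (X : Type*) [TopologicalSpace X] [CompactSpace X] [T2Space X] [Nonempty X]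
    (E : Type*) [NormedCommRing E] [NormedAlgebra ℂ E] [CompleteSpace E]
    (hE : IsSemisimple E) :
    IsSemisimple C(X, E) ∧
    (∀ (x : X) (ψ : characterSpace ℂ E), ∃ φ : characterSpace ℂ C(X, E),
        ∀ f : C(X, E), φ f = ψ (f x)) ∧
    (∀ φ : characterSpace ℂ C(X, E), ∃! p : X × characterSpace ℂ E,
        ∀ f : C(X, E), φ f = p.2 (f p.1)) :=
  hausner_semisimple_characters_general X E hE
end

section
/- Let X and Y be compact Hausdorff spaces, let E and F be unital commutative semisimple Banach algebras which are Ditkin algebras, and let T : C(X,E) → C(Y,F) be a separating linear bijection. Then (i) T is continuous, (ii) T⁻¹ is separating, and (iii) X × M(E) and Y × M(F) are homeomorphic. -/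
/-!
By Hausner's theorem the characters of `C(X, E)` are the maps `f ↦ ψ (f x)`, so that
`M(C(X, E)) ≃ₜ X × M(E)`, and `C(X, E)` inherits semisimplicity and Ditkin's condition from `E`.
It therefore suffices to treat a separating linear bijection `T : A → B` between semisimple Ditkin
algebras.

For a character `τ` of `B`, the separating functional `τ ∘ T` has a one-point support `h τ` in
`M(A)`, so it kills `J_{h τ}`; when `τ ∘ T` is continuous, Ditkin's condition upgrades this to
`τ (T a) = τ (T 1) * (h τ) a`. A gliding hump argument shows that the discontinuous `τ` have only
finitely many support points, none of them isolated, so the support points of the continuous ones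
are dense in `M(A)`, and the formula shows that `T⁻¹` is separating. The same argument for `T⁻¹`
makes the continuous `τ` dense in `M(B)`; they obey a uniform bound, hence every `τ ∘ T` is
continuous, `T` is continuous by the closed graph theorem, and `h` is a homeomorphism.
-/

open WeakDual

variable {X : Type*} [TopologicalSpace X] [CompactSpace X] [T2Space X]
  {E : Type*} [NormedCommRing E] [NormedAlgebra ℂ E] [CompleteSpace E]
  {B : Type*} [NormedCommRing B] [NormedAlgebra ℂ B] [CompleteSpace B]
  {Bt : Type*} [NormedCommRing Bt] [NormedAlgebra ℂ Bt] [CompleteSpace Bt]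

open Filter Topology

section Topology

variable {X : Type*} [TopologicalSpace X]

theorem Dense.sdiff_finite_of_not_isOpen_singleton [T1Space X] {s t : Set X} (hs : Dense s)
    (ht : t.Finite) (hiso : ∀ x ∈ t, ¬IsOpen ({x} : Set X)) : Dense (s \ t) := by
  induction t, ht using Set.Finite.induction_on with
  | empty => simpa using hs
  | @insert x t _ _ ih =>
    have : NeBot (𝓝[≠] x) := neBot_iff.mpr fun h =>
      hiso x (Set.mem_insert x t) ((isOpen_singleton_iff_punctured_nhds x).mpr h)
    rw [← Set.union_singleton, ← Set.sdiff_sdiff]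
    exact (ih fun y hy => hiso y (Set.mem_insert_of_mem x hy)).sdiff_singleton x

open Function in
theorem AccPt.exists_seq_mem_isOpen_pairwise_disjoint [T2Space X] {S : Set X} {p : X}
    (hp : AccPt p (𝓟 S)) : ∃ (x : ℕ → X) (U : ℕ → Set X), (∀ n, x n ∈ S) ∧
      (∀ n, IsOpen (U n)) ∧ (∀ n, x n ∈ U n) ∧ Pairwise (Disjoint on U) := by
  have : Std.Symm (Disjoint on (Prod.snd : X × Set X → Set X)) := ⟨fun _ _ h => h.symm⟩
  -- each new open set avoids a neighbourhood of `p`, so that `p` still attracts points of `S`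
  obtain ⟨q, hq, hd⟩ := exists_seq_of_forall_finset_exists'
    (fun q : X × Set X => q.1 ∈ S ∧ IsOpen q.2 ∧ q.1 ∈ q.2 ∧ q.2ᶜ ∈ 𝓝 p)
    (Disjoint on Prod.snd) fun F hF => by
      have hW : (⋂ q ∈ F, interior q.2ᶜ) ∈ 𝓝 p :=
        (biInter_finset_mem F).mpr fun q hq => interior_mem_nhds.mpr (hF q hq).2.2.2
      obtain ⟨y, ⟨hyW, hyS⟩, hyp⟩ := accPt_iff_nhds.mp hp _ hW
      obtain ⟨V, V', hV, hV', hyV, hpV', hVV'⟩ := t2_separation hyp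
      refine ⟨(y, V ∩ ⋂ q ∈ F, interior q.2ᶜ), ⟨hyS, ?_, ⟨hyV, hyW⟩, ?_⟩, fun q hq => ?_⟩
      · exact hV.inter (isOpen_biInter_finset fun _ _ => isOpen_interior)
      · exact mem_of_superset (hV'.mem_nhds hpV') fun z hz hzV =>
          Set.disjoint_left.mp hVV' hzV.1 hz
      · exact Set.disjoint_left.mpr fun z hzq hz =>
          interior_subset (Set.mem_iInter₂.mp hz.2 q hq) hzq
  exact ⟨fun n => (q n).1, fun n => (q n).2, fun n => (hq n).1, fun n => (hq n).2.1,
    fun n => (hq n).2.2.1, hd⟩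

end Topology

theorem LinearMap.exists_norm_le_lt_norm_apply_of_not_continuous {𝕜 E F : Type*}
    [NontriviallyNormedField 𝕜] [NormedAddCommGroup E] [NormedSpace 𝕜 E]
    [NormedAddCommGroup F] [NormedSpace 𝕜 F] {ℓ : E →ₗ[𝕜] F} (hℓ : ¬Continuous ℓ)
    {r : ℝ} (hr : 0 < r) (C : ℝ) : ∃ a : E, ‖a‖ ≤ r ∧ C < ‖ℓ a‖ := by
  by_contra! h
  obtain ⟨C', hC'⟩ := LinearMap.bound_of_ball_bound hr C ℓ fun a ha =>
    h a (mem_ball_zero_iff.mp ha).le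
  exact hℓ (AddMonoidHomClass.continuous_of_bound ℓ C' hC')

section Characters

variable {A : Type*} [NormedCommRing A] [NormedAlgebra ℂ A]

theorem WeakDual.CharacterSpace.norm_apply_le [CompleteSpace A] (φ : characterSpace ℂ A)
    (a : A) : ‖φ a‖ ≤ ‖(1 : A)‖ * ‖a‖ :=
  ((toStrongDual (φ : WeakDual ℂ A)).le_opNorm a).trans
    (mul_le_mul_of_nonneg_right (CharacterSpace.norm_le_norm_one φ) (norm_nonneg a))

theorem tsupport_gelfandTransform_mul_subset (a b : A) :
    tsupport (gelfandTransform ℂ A (a * b)) ⊆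
      tsupport (gelfandTransform ℂ A a) ∩ tsupport (gelfandTransform ℂ A b) := by
  rw [map_mul, ContinuousMap.coe_mul]
  exact Set.subset_inter tsupport_mul_subset_left tsupport_mul_subset_right

theorem mem_Jset_iff_notMem_tsupport {φ : characterSpace ℂ A} {a : A} :
    a ∈ Jset A φ ↔ φ ∉ tsupport (gelfandTransform ℂ A a) :=
  notMem_tsupport_iff_eventuallyEq.symm

theorem Continuous.characterSpace_apply [CompleteSpace A] {Z : Type*} [TopologicalSpace Z]
    {c : Z → characterSpace ℂ A} {g : Z → A} (hc : Continuous c) (hg : Continuous g) :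
    Continuous fun z => c z (g z) := by
  refine continuous_iff_continuousAt.mpr fun z₀ => ?_
  -- characters are uniformly bounded, so the weak-star topology is enough
  have h₁ : Tendsto (fun z => c z (g z - g z₀)) (𝓝 z₀) (𝓝 0) := by
    refine squeeze_zero_norm (fun z => CharacterSpace.norm_apply_le (c z) _) ?_
    simpa using tendsto_const_nhds.mul ((hg.tendsto z₀).sub_const (g z₀)).norm
  have h₂ : Tendsto (fun z => c z (g z₀)) (𝓝 z₀) (𝓝 (c z₀ (g z₀))) :=
    ((gelfandTransform ℂ A (g z₀)).continuous.comp hc).tendsto z₀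
  show Tendsto _ _ _
  convert h₁.add h₂ using 2 <;> simp

open Function in
theorem tsum_sub_mem_Jset {f : ℕ → A} (hf : Summable f) {U : ℕ → Set (characterSpace ℂ A)}
    (hU : ∀ n, IsOpen (U n)) (hd : Pairwise (Disjoint on U))
    (hfU : ∀ n, support (gelfandTransform ℂ A (f n)) ⊆ U n)
    {n : ℕ} {φ : characterSpace ℂ A} (hφ : φ ∈ U n) : ∑' m, f m - f n ∈ Jset A φ := by
  filter_upwards [(hU n).mem_nhds hφ] with χ hχ
  rw [map_sub, hf.map_tsum χ (map_continuous χ), tsum_eq_single n, sub_self]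
  intro m hm
  by_contra hne
  exact Set.disjoint_left.mp (hd hm) (hfU m (by simpa using hne)) hχ

end Characters

section Ditkin

variable {A : Type*} [NormedCommRing A] [NormedAlgebra ℂ A]

theorem IsDitkinAlgebra.mem_closure_Jset (hA : IsDitkinAlgebra A) {φ : characterSpace ℂ A}
    {a : A} (ha : φ a = 0) : a ∈ closure (Jset A φ) := by
  refine closure_mono ?_ (hA φ a ha)
  rintro _ ⟨j, hj, rfl⟩
  filter_upwards [hj] with χ hχ
  rw [map_mul, hχ, mul_zero]

theorem IsDitkinAlgebra.apply_eq_zero_of_forall_mem_Jset (hA : IsDitkinAlgebra A)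
    {φ : characterSpace ℂ A} {ℓ : A → ℂ} (hℓ : Continuous ℓ)
    (hJ : ∀ j ∈ Jset A φ, ℓ j = 0) {a : A} (ha : φ a = 0) : ℓ a = 0 :=
  closure_minimal hJ (isClosed_eq hℓ continuous_const) (hA.mem_closure_Jset ha)

theorem IsDitkinAlgebra.exists_mem_Jset_apply_ne_zero (hA : IsDitkinAlgebra A)
    {φ χ : characterSpace ℂ A} (hφχ : φ ≠ χ) : ∃ j ∈ Jset A φ, χ j ≠ 0 := by
  obtain ⟨b, hb⟩ : ∃ b, φ b ≠ χ b := by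
    by_contra! h
    exact hφχ (DFunLike.ext _ _ h)
  by_contra! hJ
  have := hA.apply_eq_zero_of_forall_mem_Jset (map_continuous χ) hJ
    (a := b - φ b • 1) (by simp)
  simp only [map_sub, map_smul, map_one, smul_eq_mul, mul_one] at this
  exact hb (sub_eq_zero.mp this).symm

theorem IsDitkinAlgebra.exists_apply_eq_one_tsupport_subset [CompleteSpace A]
    (hA : IsDitkinAlgebra A) {U : Set (characterSpace ℂ A)} (hU : IsOpen U)
    {φ : characterSpace ℂ A} (hφ : φ ∈ U) :
    ∃ a : A, φ a = 1 ∧ tsupport (gelfandTransform ℂ A a) ⊆ U := by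
  suffices ∃ a : A, φ a ≠ 0 ∧ Disjoint (tsupport (gelfandTransform ℂ A a)) Uᶜ by
    obtain ⟨a, ha, hdisj⟩ := this
    refine ⟨(φ a)⁻¹ • a, by simp [ha], fun χ hχ => ?_⟩
    rw [map_smul, ContinuousMap.coe_smul] at hχ
    exact not_not.mp
      (Set.disjoint_left.mp hdisj (tsupport_smul_subset_right (fun _ => (φ a)⁻¹) _ hχ))
  refine hU.isClosed_compl.isCompact.induction_on ⟨1, by simp, Set.disjoint_empty _⟩
    ?_ ?_ ?_
  · rintro s t hst ⟨a, ha, hdisj⟩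
    exact ⟨a, ha, hdisj.mono_right hst⟩
  · rintro s t ⟨a, ha, hdisja⟩ ⟨b, hb, hdisjb⟩
    refine ⟨a * b, by simp [ha, hb], Disjoint.union_right ?_ ?_⟩
    · exact hdisja.mono_left ((tsupport_gelfandTransform_mul_subset a b).trans
        Set.inter_subset_left)
    · exact hdisjb.mono_left ((tsupport_gelfandTransform_mul_subset a b).trans
        Set.inter_subset_right)
  · intro ψ hψ
    obtain ⟨j, hj, hφj⟩ := hA.exists_mem_Jset_apply_ne_zero (φ := ψ) (χ := φ)
      (fun h => hψ (h ▸ hφ))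
    exact ⟨_, mem_nhdsWithin_of_mem_nhds ((isClosed_tsupport _).isOpen_compl.mem_nhds
      (mem_Jset_iff_notMem_tsupport.mp hj)), j, hφj, disjoint_compl_right⟩

def eventuallyZeroIdeal (l : Filter (characterSpace ℂ A)) : Ideal A where
  carrier := {a | ∀ᶠ χ in l, χ a = 0}
  add_mem' ha hb := by
    filter_upwards [ha, hb] with χ ha hb
    rw [map_add, ha, hb, add_zero]
  zero_mem' := Eventually.of_forall fun χ => map_zero χ
  smul_mem' c a ha := by
    filter_upwards [ha] with χ ha
    rw [smul_eq_mul, map_mul, ha, mul_zero]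

theorem mem_eventuallyZeroIdeal_nhdsSet {S : Set (characterSpace ℂ A)} {a : A} :
    a ∈ eventuallyZeroIdeal (𝓝ˢ S) ↔ Disjoint (tsupport (gelfandTransform ℂ A a)) S := by
  rw [Set.disjoint_right]
  exact eventually_nhdsSet_iff_forall.trans
    (forall₂_congr fun _ _ => mem_Jset_iff_notMem_tsupport)

theorem exists_characterSpace_forall_mem_eq_zero [CompleteSpace A] {I : Ideal A}
    (hI : I ≠ ⊤) : ∃ φ : characterSpace ℂ A, ∀ a ∈ I, φ a = 0 := by
  obtain ⟨M, hM, hIM⟩ := I.exists_le_maximal hI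
  exact ⟨M.toCharacterSpace, fun a ha => M.toCharacterSpace_apply_eq_zero_of_mem (hIM ha)⟩

theorem IsDitkinAlgebra.exists_tsupport_subset_eventually_eq_one [CompleteSpace A]
    (hA : IsDitkinAlgebra A) {K U : Set (characterSpace ℂ A)} (hK : IsClosed K)
    (hU : IsOpen U) (hKU : K ⊆ U) :
    ∃ u : A, tsupport (gelfandTransform ℂ A u) ⊆ U ∧ ∀ᶠ χ in 𝓝ˢ K, χ u = 1 := by
  have hsup : eventuallyZeroIdeal (𝓝ˢ Uᶜ) ⊔ eventuallyZeroIdeal (𝓝ˢ K) = (⊤ : Ideal A) := by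
    by_contra hne
    obtain ⟨φ, hφ⟩ := exists_characterSpace_forall_mem_eq_zero hne
    obtain ⟨a, ha, haI⟩ : ∃ a : A, φ a = 1 ∧
        a ∈ eventuallyZeroIdeal (𝓝ˢ Uᶜ) ⊔ eventuallyZeroIdeal (𝓝ˢ K) := by
      by_cases hφU : φ ∈ U
      · obtain ⟨a, ha, haU⟩ := hA.exists_apply_eq_one_tsupport_subset hU hφU
        exact ⟨a, ha, Ideal.mem_sup_left (mem_eventuallyZeroIdeal_nhdsSet.mpr
          (Set.disjoint_compl_right_iff_subset.mpr haU))⟩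
      · obtain ⟨a, ha, haK⟩ :=
          hA.exists_apply_eq_one_tsupport_subset hK.isOpen_compl fun h => hφU (hKU h)
        exact ⟨a, ha, Ideal.mem_sup_right (mem_eventuallyZeroIdeal_nhdsSet.mpr
          (Set.subset_compl_iff_disjoint_right.mp haK))⟩
    exact one_ne_zero (ha.symm.trans (hφ a haI))
  obtain ⟨u, hu, v, hv, huv⟩ := Submodule.mem_sup.mp (hsup ▸ Submodule.mem_top : (1 : A) ∈ _)
  refine ⟨u, Set.disjoint_compl_right_iff_subset.mp (mem_eventuallyZeroIdeal_nhdsSet.mp hu), ?_⟩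
  filter_upwards [show ∀ᶠ χ in 𝓝ˢ K, χ v = 0 from hv] with χ hχ
  rw [← add_zero (χ u), ← hχ, ← map_add, huv, map_one]

end Ditkin

section FunctionalSupport

variable {A : Type*} [NormedCommRing A] [NormedAlgebra ℂ A] (ℓ : A →ₗ[ℂ] ℂ)

/-- `ℓ` vanishes on `U` in the sense of distributions. -/
def VanishesOn (U : Set (characterSpace ℂ A)) : Prop :=
  ∀ a : A, tsupport (gelfandTransform ℂ A a) ⊆ U → ℓ a = 0

def functionalSupport : Set (characterSpace ℂ A) :=
  {φ | ∀ U ∈ 𝓝 φ, ¬VanishesOn ℓ U}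

variable {ℓ}

theorem VanishesOn.mono {U V : Set (characterSpace ℂ A)} (hV : VanishesOn ℓ V) (hUV : U ⊆ V) :
    VanishesOn ℓ U :=
  fun a ha => hV a (ha.trans hUV)

theorem IsSemisimple.eq_zero_of_tsupport_eq_empty (hss : IsSemisimple A) {a : A}
    (ha : tsupport (gelfandTransform ℂ A a) = ∅) : a = 0 :=
  hss a fun χ => by simpa using congr_fun (tsupport_eq_empty_iff.mp ha) χ

theorem vanishesOn_empty (hss : IsSemisimple A) : VanishesOn ℓ ∅ := fun a ha => by
  rw [hss.eq_zero_of_tsupport_eq_empty (Set.subset_empty_iff.mp ha), map_zero]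

theorem VanishesOn.union [CompleteSpace A] (hA : IsDitkinAlgebra A)
    {U V : Set (characterSpace ℂ A)} (hU : IsOpen U) (hV : IsOpen V)
    (hℓU : VanishesOn ℓ U) (hℓV : VanishesOn ℓ V) : VanishesOn ℓ (U ∪ V) := by
  intro a ha
  obtain ⟨u, huU, hu⟩ := hA.exists_tsupport_subset_eventually_eq_one
    ((isClosed_tsupport _).sdiff hV) hU fun χ hχ => (ha hχ.1).resolve_right hχ.2
  have hau : ℓ (a * u) = 0 :=
    hℓU _ ((tsupport_gelfandTransform_mul_subset a u).trans (Set.inter_subset_right.trans huU))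
  have hrest : ℓ (a * (1 - u)) = 0 := by
    refine hℓV _ fun χ hχ => ?_
    have hχa := ((tsupport_gelfandTransform_mul_subset a (1 - u)) hχ).1
    by_contra hχV
    refine mem_Jset_iff_notMem_tsupport.mp ?_ hχ
    filter_upwards [eventually_nhdsSet_iff_forall.mp hu χ ⟨hχa, hχV⟩] with ψ hψ
    rw [map_mul, map_sub, map_one, hψ, sub_self, mul_zero]
  rw [← add_sub_cancel (a * u) a, ← mul_one_sub, map_add, hau, hrest, add_zero]

theorem vanishesOn_compl_functionalSupport [CompleteSpace A] (hss : IsSemisimple A)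
    (hA : IsDitkinAlgebra A) : VanishesOn ℓ (functionalSupport ℓ)ᶜ := by
  intro a ha
  suffices ∃ W, IsOpen W ∧ tsupport (gelfandTransform ℂ A a) ⊆ W ∧ VanishesOn ℓ W by
    obtain ⟨W, -, haW, hℓW⟩ := this
    exact hℓW a haW
  refine (isClosed_tsupport _).isCompact.induction_on
    ⟨∅, isOpen_empty, Set.empty_subset _, vanishesOn_empty hss⟩ ?_ ?_ ?_
  · rintro s t hst ⟨W, hW, htW, hℓW⟩
    exact ⟨W, hW, hst.trans htW, hℓW⟩
  · rintro s t ⟨W, hW, hsW, hℓW⟩ ⟨W', hW', htW', hℓW'⟩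
    exact ⟨W ∪ W', hW.union hW', Set.union_subset_union hsW htW', hℓW.union hA hW hW' hℓW'⟩
  · intro φ hφ
    obtain ⟨U, hU, hℓU⟩ : ∃ U ∈ 𝓝 φ, VanishesOn ℓ U := by
      simpa [functionalSupport] using ha hφ
    exact ⟨interior U, mem_nhdsWithin_of_mem_nhds (interior_mem_nhds.mpr hU), interior U,
      isOpen_interior, subset_rfl, hℓU.mono interior_subset⟩

theorem functionalSupport_nonempty [CompleteSpace A] (hss : IsSemisimple A)
    (hA : IsDitkinAlgebra A) (hℓ : ℓ ≠ 0) : (functionalSupport ℓ).Nonempty := by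
  by_contra h
  rw [Set.not_nonempty_iff_eq_empty] at h
  refine hℓ (LinearMap.ext fun a => vanishesOn_compl_functionalSupport hss hA a ?_)
  simp [h]

theorem functionalSupport_subsingleton (hss : IsSemisimple A)
    (hℓ : ∀ a b : A, a * b = 0 → ℓ a * ℓ b = 0) : (functionalSupport ℓ).Subsingleton := by
  intro φ hφ ψ hψ
  by_contra hne
  obtain ⟨U, V, hU, hV, hφU, hψV, hUV⟩ := t2_separation hne
  obtain ⟨a, haU, ha⟩ : ∃ a, tsupport (gelfandTransform ℂ A a) ⊆ U ∧ ℓ a ≠ 0 := by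
    simpa [VanishesOn] using hφ U (hU.mem_nhds hφU)
  obtain ⟨b, hbV, hb⟩ : ∃ b, tsupport (gelfandTransform ℂ A b) ⊆ V ∧ ℓ b ≠ 0 := by
    simpa [VanishesOn] using hψ V (hV.mem_nhds hψV)
  have hab : a * b = 0 := hss.eq_zero_of_tsupport_eq_empty <| Set.subset_empty_iff.mp <|
    (tsupport_gelfandTransform_mul_subset a b).trans
      ((Set.inter_subset_inter haU hbV).trans hUV.inter_eq.subset)
  exact mul_ne_zero ha hb (hℓ a b hab)

theorem exists_forall_mem_Jset_eq_zero [CompleteSpace A] (hss : IsSemisimple A)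
    (hA : IsDitkinAlgebra A) (hℓ : ℓ ≠ 0) (hsep : ∀ a b : A, a * b = 0 → ℓ a * ℓ b = 0) :
    ∃ φ : characterSpace ℂ A, ∀ a ∈ Jset A φ, ℓ a = 0 := by
  obtain ⟨φ, hφ⟩ := functionalSupport_nonempty hss hA hℓ
  refine ⟨φ, fun a ha => vanishesOn_compl_functionalSupport hss hA a fun χ hχ hχℓ => ?_⟩
  exact mem_Jset_iff_notMem_tsupport.mp ha (functionalSupport_subsingleton hss hsep hχℓ hφ ▸ hχ)

end FunctionalSupport

section SupportMap

variable {A B : Type*} [NormedCommRing A] [NormedAlgebra ℂ A] [NormedCommRing B]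
  [NormedAlgebra ℂ B]

/-- `h τ` is a support point of the functional `τ ∘ T`. -/
def IsSupportMap (T : A →ₗ[ℂ] B) (h : characterSpace ℂ B → characterSpace ℂ A) : Prop :=
  ∀ τ, ∀ a ∈ Jset A (h τ), τ (T a) = 0

theorem exists_isSupportMap [CompleteSpace A] (hss : IsSemisimple A) (hA : IsDitkinAlgebra A)
    {T : A →ₗ[ℂ] B} (hT : Function.Surjective T)
    (hsep : ∀ a b : A, a * b = 0 → T a * T b = 0) : ∃ h, IsSupportMap T h := by
  have (τ : characterSpace ℂ B) : ∃ φ : characterSpace ℂ A, ∀ a ∈ Jset A φ, τ (T a) = 0 := by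
    obtain ⟨f, hf⟩ := hT 1
    refine exists_forall_mem_Jset_eq_zero (ℓ := (CharacterSpace.toAlgHom τ).toLinearMap ∘ₗ T)
      hss hA (fun h0 => ?_) fun a b hab => ?_
    · simpa [hf] using LinearMap.congr_fun h0 f
    · simpa [← map_mul] using congrArg τ (hsep a b hab)
  choose h hh using this
  exact ⟨h, hh⟩

variable {T : A →ₗ[ℂ] B} {h : characterSpace ℂ B → characterSpace ℂ A}

namespace IsSupportMap

theorem apply_eq_mul (hA : IsDitkinAlgebra A) (hh : IsSupportMap T h)
    {τ : characterSpace ℂ B} (hτ : Continuous fun a => τ (T a)) (a : A) :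
    τ (T a) = τ (T 1) * h τ a := by
  have := hA.apply_eq_zero_of_forall_mem_Jset hτ (hh τ) (a := a - h τ a • 1) (by simp)
  rw [map_sub, map_sub, map_smul, map_smul, smul_eq_mul, sub_eq_zero] at this
  rw [this, mul_comm]

theorem apply_one_ne_zero (hA : IsDitkinAlgebra A) (hh : IsSupportMap T h)
    (hT : Function.Surjective T) {τ : characterSpace ℂ B} (hτ : Continuous fun a => τ (T a)) :
    τ (T 1) ≠ 0 := fun h0 => by
  obtain ⟨f, hf⟩ := hT 1
  simpa [hf, h0] using hh.apply_eq_mul hA hτ f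

theorem continuous_of_isOpen_singleton (hh : IsSupportMap T h) {τ : characterSpace ℂ B}
    (hopen : IsOpen {h τ}) : Continuous fun a => τ (T a) := by
  have (a : A) : τ (T a) = h τ a * τ (T 1) := by
    have := hh τ (a - h τ a • 1) <| by
      filter_upwards [hopen.mem_nhds rfl] with χ hχ
      rw [Set.mem_singleton_iff.mp hχ]
      simp
    rwa [map_sub, map_sub, map_smul, map_smul, sub_eq_zero] at this
  rw [funext this]
  exact (map_continuous (h τ)).mul continuous_const

theorem exists_support_subset_norm_le_one_lt [CompleteSpace A] (hA : IsDitkinAlgebra A)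
    (hh : IsSupportMap T h) {τ : characterSpace ℂ B} (hτ : ¬Continuous fun a => τ (T a))
    {U : Set (characterSpace ℂ A)} (hU : IsOpen U) (hτU : h τ ∈ U) (C : ℝ) :
    ∃ a : A, Function.support (gelfandTransform ℂ A a) ⊆ U ∧ ‖a‖ ≤ 1 ∧ C < ‖τ (T a)‖ := by
  obtain ⟨u, huU, hu⟩ := hA.exists_tsupport_subset_eventually_eq_one isClosed_singleton hU
    (Set.singleton_subset_iff.mpr hτU)
  rw [nhdsSet_singleton] at hu
  obtain ⟨a, ha, hCa⟩ := LinearMap.exists_norm_le_lt_norm_apply_of_not_continuous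
    (ℓ := (CharacterSpace.toAlgHom τ).toLinearMap ∘ₗ T) hτ (r := (‖u‖ + 1)⁻¹) (by positivity) C
  have hau : τ (T (a * u)) = τ (T a) := by
    have := hh τ (a - a * u) <| by
      filter_upwards [hu] with χ hχ
      simp [hχ]
    rwa [map_sub, map_sub, sub_eq_zero, eq_comm] at this
  refine ⟨a * u, ?_, ?_, by simpa [hau] using hCa⟩
  · rw [map_mul, ContinuousMap.coe_mul]
    exact (Function.support_mul_subset_right _ _).trans ((subset_tsupport _).trans huU)
  · calc ‖a * u‖ ≤ ‖a‖ * ‖u‖ := norm_mul_le a u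
      _ ≤ (‖u‖ + 1)⁻¹ * (‖u‖ + 1) := by gcongr; linarith
      _ = 1 := inv_mul_cancel₀ (by positivity)

/-- The gliding hump argument. -/
theorem finite_image_not_continuous [CompleteSpace A] [CompleteSpace B] (hA : IsDitkinAlgebra A)
    (hh : IsSupportMap T h) : (h '' {τ | ¬Continuous fun a => τ (T a)}).Finite := by
  by_contra hinf
  obtain ⟨p, hp⟩ := Set.Infinite.exists_accPt_principal hinf
  obtain ⟨x, U, hxS, hU, hxU, hd⟩ := hp.exists_seq_mem_isOpen_pairwise_disjoint
  choose τ hτ hτx using hxS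
  choose f hfU hf hfτ using fun n =>
    hh.exists_support_subset_norm_le_one_lt hA (hτ n) (hU n) ((hτx n).symm ▸ hxU n) (n * 2 ^ n)
  set c : ℕ → A := fun n => (2 : ℂ)⁻¹ ^ n • f n
  have hc : Summable c := by
    refine Summable.of_norm_bounded summable_geometric_two fun n => ?_
    calc ‖c n‖ = (1 / 2) ^ n * ‖f n‖ := by simp [c, norm_smul]
      _ ≤ (1 / 2) ^ n := mul_le_of_le_one_right (by positivity) (hf n)
  have hcU (n : ℕ) : Function.support (gelfandTransform ℂ A (c n)) ⊆ U n := by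
    rw [map_smul, ContinuousMap.coe_smul]
    exact (Function.support_const_smul_subset _ _).trans (hfU n)
  obtain ⟨n, hn⟩ := exists_nat_gt (‖(1 : B)‖ * ‖T (∑' m, c m)‖)
  have hsum : τ n (T (∑' m, c m)) = τ n (T (c n)) := by
    have := hh (τ n) _ ((hτx n).symm ▸ tsum_sub_mem_Jset hc hU hd hcU (hxU n))
    rwa [map_sub, map_sub, sub_eq_zero] at this
  have hbig : (n : ℝ) < ‖τ n (T (c n))‖ := by
    have : ‖τ n (T (c n))‖ = (2 ^ n)⁻¹ * ‖τ n (T (f n))‖ := by simp [c]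
    rw [this, lt_inv_mul_iff₀ (by positivity)]
    linarith [hfτ n]
  exact (hsum ▸ hbig).not_ge ((CharacterSpace.norm_apply_le _ _).trans hn.le)

theorem dense_range [CompleteSpace A] (hA : IsDitkinAlgebra A) (hB : IsSemisimple B)
    (hT : Function.Injective T) (hh : IsSupportMap T h) : Dense (Set.range h) := by
  by_contra hd
  obtain ⟨φ, hφ⟩ : ∃ φ, φ ∉ closure (Set.range h) := by simpa [Dense] using hd
  obtain ⟨a, ha, haU⟩ := hA.exists_apply_eq_one_tsupport_subset isClosed_closure.isOpen_compl hφ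
  have hTa : T a = 0 := hB _ fun τ => hh τ a <|
    mem_Jset_iff_notMem_tsupport.mpr fun hτ => haU hτ (subset_closure ⟨τ, rfl⟩)
  rw [hT (hTa.trans (map_zero T).symm), map_zero] at ha
  exact zero_ne_one ha

theorem dense_image_continuous [CompleteSpace A] [CompleteSpace B] (hA : IsDitkinAlgebra A)
    (hB : IsSemisimple B) (hT : Function.Injective T) (hh : IsSupportMap T h) :
    Dense (h '' {τ | Continuous fun a => τ (T a)}) := by
  refine ((hh.dense_range hA hB hT).sdiff_finite_of_not_isOpen_singleton
    (hh.finite_image_not_continuous hA) ?_).mono ?_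
  · rintro _ ⟨τ, hτ, rfl⟩ hopen
    exact hτ (hh.continuous_of_isOpen_singleton hopen)
  · rintro _ ⟨⟨τ, rfl⟩, hτ⟩
    exact ⟨τ, by_contra fun hc => hτ ⟨τ, hc, rfl⟩, rfl⟩

theorem mul_eq_zero_of_apply_mul_apply_eq_zero (hss : IsSemisimple A) (hA : IsDitkinAlgebra A)
    (hT : Function.Surjective T) (hh : IsSupportMap T h)
    (hd : Dense (h '' {τ | Continuous fun a => τ (T a)})) {a b : A} (hab : T a * T b = 0) :
    a * b = 0 := by
  refine hss _ (hd.induction ?_ (isClosed_eq (gelfandTransform ℂ A (a * b)).continuous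
    continuous_const))
  rintro _ ⟨τ, hτ, rfl⟩
  have hτ1 := hh.apply_one_ne_zero hA hT hτ
  have := congrArg τ hab
  rw [map_mul, map_zero, hh.apply_eq_mul hA hτ a, hh.apply_eq_mul hA hτ b] at this
  have : τ (T 1) * τ (T 1) * h τ (a * b) = 0 := by rw [map_mul]; linear_combination this
  simpa [hτ1] using this

theorem continuous_apply_of_dense [CompleteSpace A] [CompleteSpace B] (hA : IsDitkinAlgebra A)
    (hh : IsSupportMap T h) (hd : Dense {τ : characterSpace ℂ B | Continuous fun a => τ (T a)})
    (τ : characterSpace ℂ B) : Continuous fun a => τ (T a) := by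
  set K := ‖(1 : B)‖ * ‖T 1‖ * ‖(1 : A)‖
  have hK (a : A) (τ : characterSpace ℂ B) : ‖τ (T a)‖ ≤ K * ‖a‖ := by
    refine hd.induction (P := fun τ => ‖τ (T a)‖ ≤ K * ‖a‖) (fun τ hτ => ?_)
      (isClosed_le (gelfandTransform ℂ B (T a)).continuous.norm continuous_const) τ
    rw [hh.apply_eq_mul hA hτ a, norm_mul]
    calc ‖τ (T 1)‖ * ‖h τ a‖ ≤ (‖(1 : B)‖ * ‖T 1‖) * (‖(1 : A)‖ * ‖a‖) := by
          gcongr <;> exact CharacterSpace.norm_apply_le _ _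
      _ = K * ‖a‖ := by ring
  exact AddMonoidHomClass.continuous_of_bound
    ((CharacterSpace.toAlgHom τ).toLinearMap ∘ₗ T) K fun a => hK a τ

theorem continuous_apply_of_leftInverse (hB : IsDitkinAlgebra B) {S : B →ₗ[ℂ] A}
    {k : characterSpace ℂ A → characterSpace ℂ B} (hk : IsSupportMap S k)
    (hS : Function.Surjective S) (hST : Function.LeftInverse S T) {φ : characterSpace ℂ A}
    (hφ : Continuous fun b => φ (S b)) : Continuous fun a => k φ (T a) := by
  have (a : A) : k φ (T a) = φ a / φ (S 1) := by
    rw [eq_div_iff (hk.apply_one_ne_zero hB hS hφ), mul_comm, ← hk.apply_eq_mul hB hφ, hST a]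
  simp_rw [this]
  exact (map_continuous φ).div_const _

theorem apply_eq_div (hA : IsDitkinAlgebra A) (hT : Function.Surjective T)
    (hh : IsSupportMap T h) {τ : characterSpace ℂ B} (hτ : Continuous fun a => τ (T a))
    (a : A) : h τ a = τ (T a) / τ (T 1) := by
  rw [eq_div_iff (hh.apply_one_ne_zero hA hT hτ), hh.apply_eq_mul hA hτ a, mul_comm]

theorem continuous (hA : IsDitkinAlgebra A) (hT : Function.Surjective T) (hh : IsSupportMap T h)
    (hcont : ∀ τ : characterSpace ℂ B, Continuous fun a => τ (T a)) : Continuous h := by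
  refine Continuous.subtype_mk (WeakDual.continuous_of_continuous_eval fun a => ?_) _
  have : (fun τ => (h τ : WeakDual ℂ A) a) = fun τ => τ (T a) / τ (T 1) :=
    funext fun τ => hh.apply_eq_div hA hT (hcont τ) a
  rw [this]
  exact (gelfandTransform ℂ B (T a)).continuous.div (gelfandTransform ℂ B (T 1)).continuous
    fun τ => hh.apply_one_ne_zero hA hT (hcont τ)

theorem injective (hA : IsDitkinAlgebra A) (hT : Function.Surjective T) (hh : IsSupportMap T h)
    (hcont : ∀ τ : characterSpace ℂ B, Continuous fun a => τ (T a)) : Function.Injective h := by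
  intro τ₁ τ₂ heq
  have key (b : B) : τ₁ b / τ₁ (T 1) = τ₂ b / τ₂ (T 1) := by
    obtain ⟨a, rfl⟩ := hT b
    rw [← hh.apply_eq_div hA hT (hcont τ₁), ← hh.apply_eq_div hA hT (hcont τ₂), heq]
  have h1 : τ₁ (T 1) = τ₂ (T 1) := by simpa using key 1
  ext b
  simpa [h1, div_left_inj' (hh.apply_one_ne_zero hA hT (hcont τ₂))] using key b

theorem surjective [CompleteSpace A] [CompleteSpace B] (hA : IsDitkinAlgebra A)
    (hB : IsSemisimple B) (hT : Function.Bijective T)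
    (hh : IsSupportMap T h) (hcont : ∀ τ : characterSpace ℂ B, Continuous fun a => τ (T a)) :
    Function.Surjective h := by
  rw [← Set.range_eq_univ, ← (hh.dense_range hA hB hT.1).closure_eq,
    (isCompact_range (hh.continuous hA hT.2 hcont)).isClosed.closure_eq]

end IsSupportMap

end SupportMap

section SeparatingBijection

variable {A B : Type*} [NormedCommRing A] [NormedAlgebra ℂ A] [CompleteSpace A]
  [NormedCommRing B] [NormedAlgebra ℂ B] [CompleteSpace B] {T : A →ₗ[ℂ] B}

theorem LinearMap.continuous_of_forall_continuous_characterSpace_apply (hB : IsSemisimple B)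
    (hT : ∀ τ : characterSpace ℂ B, Continuous fun a => τ (T a)) : Continuous T := by
  refine T.continuous_of_seq_closed_graph fun u a b hu hTu => ?_
  refine (sub_eq_zero.mp (hB _ fun τ => ?_)).symm
  rw [map_sub, sub_eq_zero]
  exact tendsto_nhds_unique (((hT τ).tendsto a).comp hu) (((map_continuous τ).tendsto b).comp hTu)

theorem separating_linear_bijection_of_isDitkinAlgebra (hAss : IsSemisimple A)
    (hA : IsDitkinAlgebra A) (hBss : IsSemisimple B) (hB : IsDitkinAlgebra B)
    (hbij : Function.Bijective T) (hsep : ∀ a b : A, a * b = 0 → T a * T b = 0) :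
    Continuous T ∧ (∀ a b : A, T a * T b = 0 → a * b = 0) ∧
      Nonempty (characterSpace ℂ A ≃ₜ characterSpace ℂ B) := by
  obtain ⟨h, hh⟩ := exists_isSupportMap hAss hA hbij.2 hsep
  have hsymm (a b : A) (hab : T a * T b = 0) : a * b = 0 :=
    hh.mul_eq_zero_of_apply_mul_apply_eq_zero hAss hA hbij.2
      (hh.dense_image_continuous hA hBss hbij.1) hab
  -- run the argument again for `T⁻¹`, which is now known to be separating
  let S := (LinearEquiv.ofBijective T hbij).symm
  obtain ⟨k, hk⟩ := exists_isSupportMap hBss hB S.surjective fun b₁ b₂ hb =>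
    hsymm _ _ (by simpa [S] using hb)
  have hdense : Dense {τ : characterSpace ℂ B | Continuous fun a => τ (T a)} :=
    (hk.dense_image_continuous hB hAss S.injective).mono <| by
      rintro _ ⟨φ, hφ, rfl⟩
      exact hk.continuous_apply_of_leftInverse (T := T) hB S.surjective S.apply_symm_apply hφ
  have hcont := hh.continuous_apply_of_dense hA hdense
  exact ⟨T.continuous_of_forall_continuous_characterSpace_apply hBss hcont, hsymm,
    ⟨(Continuous.homeoOfEquivCompactToT2 (f := Equiv.ofBijective h
      ⟨hh.injective hA hbij.2 hcont, hh.surjective hA hBss hbij hcont⟩)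
      (hh.continuous hA hbij.2 hcont)).symm⟩⟩

end SeparatingBijection

namespace ContinuousMap

variable (X : Type*) [TopologicalSpace X] (E : Type*) [NormedCommRing E] [NormedAlgebra ℂ E]

def constAlgHom : E →ₐ[ℂ] C(X, E) where
  toFun := const X
  map_one' := rfl
  map_mul' _ _ := rfl
  map_zero' := rfl
  map_add' _ _ := rfl
  commutes' _ := rfl

noncomputable def ofScalars : C(X, ℂ) →ₐ[ℂ] C(X, E) :=
  (Algebra.ofId ℂ E).compLeftContinuous ℂ (continuous_algebraMap ℂ E)

variable {X E}

@[simp]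
theorem constAlgHom_apply (e : E) (x : X) : constAlgHom X E e x = e := rfl

@[simp]
theorem ofScalars_apply (g : C(X, ℂ)) (x : X) : ofScalars X E g x = algebraMap ℂ E (g x) := rfl

variable [CompactSpace X]

theorem exists_eventually_eq_one_norm_ofScalars_mul_lt [T2Space X] (F : C(X, E)) {x : X}
    {ε : ℝ} (hx : ‖F x‖ < ε) :
    ∃ g : C(X, ℂ), (∀ᶠ y in 𝓝 x, g y = 1) ∧ ‖ofScalars X E g * F‖ < ε := by
  obtain ⟨δ, hxδ, hδε⟩ := exists_between hx
  obtain ⟨r, hr₀, hr₁, hr⟩ := exists_continuous_zero_one_of_isClosed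
    (isClosed_le continuous_const F.continuous.norm)
    (isClosed_le F.continuous.norm continuous_const)
    (Set.disjoint_left.mpr fun y hε hδ => (hδε.trans_le hε).not_ge hδ)
  refine ⟨(ContinuousMap.mk ((↑) : ℝ → ℂ) Complex.continuous_ofReal).comp r, ?_, ?_⟩
  · filter_upwards [(isOpen_lt F.continuous.norm continuous_const).mem_nhds hxδ] with y hy
    simp [hr₁ hy.le]
  · rw [norm_lt_iff _ ((norm_nonneg _).trans_lt hx)]
    intro y
    rw [mul_apply, ofScalars_apply, ← Algebra.smul_def, norm_smul]
    simp only [comp_apply, coe_mk, Complex.norm_real, Real.norm_of_nonneg (hr y).1]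
    by_cases hy : ε ≤ ‖F y‖
    · simpa [hr₀ hy] using (norm_nonneg _).trans_lt hx
    · calc r y * ‖F y‖ ≤ 1 * ‖F y‖ := by gcongr; exact (hr y).2
        _ < ε := by simpa using hy

variable [CompleteSpace E]

noncomputable def evalCharacter (x : X) (ψ : characterSpace ℂ E) :
    characterSpace ℂ C(X, E) :=
  CharacterSpace.equivAlgHom.symm ((CharacterSpace.toAlgHom ψ).comp (evalAlgHom ℂ E x))

@[simp]
theorem evalCharacter_apply (x : X) (ψ : characterSpace ℂ E) (f : C(X, E)) :
    evalCharacter x ψ f = ψ (f x) :=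
  congrFun (CharacterSpace.equivAlgHom_symm_coe _) f

theorem continuous_evalCharacter :
    Continuous fun p : X × characterSpace ℂ E => evalCharacter p.1 p.2 :=
  Continuous.subtype_mk (WeakDual.continuous_of_continuous_eval fun f =>
    (continuous_snd.characterSpace_apply (f.continuous.comp continuous_fst)).congr fun p =>
      (evalCharacter_apply p.1 p.2 f).symm) _

theorem isSemisimple (hE : IsSemisimple E) : IsSemisimple C(X, E) := fun f hf =>
  ext fun x => hE _ fun ψ => by simpa using hf (evalCharacter x ψ)

variable [T2Space X]

theorem exists_eq_evalCharacter (φ : characterSpace ℂ C(X, E)) :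
    ∃ x ψ, φ = evalCharacter x ψ := by
  obtain ⟨x, hx⟩ := (CharacterSpace.continuousMapEval_bijective X ℂ).2
    (CharacterSpace.equivAlgHom.symm ((CharacterSpace.toAlgHom φ).comp (ofScalars X E)))
  have hφx (g : C(X, ℂ)) : φ (ofScalars X E g) = g x := by
    simpa using (DFunLike.congr_fun hx g).symm
  have hvanish (f : C(X, E)) (hf : f x = 0) : φ f = 0 := by
    refine (isClosed_eq (map_continuous φ) continuous_const).closure_subset
      (Metric.mem_closure_iff.mpr fun ε hε => ?_)
    obtain ⟨g, hg, hgf⟩ := f.exists_eventually_eq_one_norm_ofScalars_mul_lt (x := x)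
      (by simpa [hf] using hε)
    refine ⟨ofScalars X E (1 - g) * f, ?_, ?_⟩
    · simp [hφx, hg.self_of_nhds]
    · have : f - ofScalars X E (1 - g) * f = ofScalars X E g * f := by
        rw [map_sub, map_one]
        ring
      rwa [dist_eq_norm, this]
  refine ⟨x, CharacterSpace.equivAlgHom.symm ((CharacterSpace.toAlgHom φ).comp
    (constAlgHom X E)), DFunLike.ext _ _ fun f => ?_⟩
  have := hvanish (f - constAlgHom X E (f x)) (by simp)
  rw [map_sub, sub_eq_zero] at this
  simp [this]

theorem evalCharacter_injective :
    Function.Injective fun p : X × characterSpace ℂ E => evalCharacter p.1 p.2 := by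
  rintro ⟨x₁, ψ₁⟩ ⟨x₂, ψ₂⟩ heq
  have hx : x₁ = x₂ := (CharacterSpace.continuousMapEval_bijective X ℂ).1 <|
    DFunLike.ext _ _ fun g => by
      simpa [AlgHomClass.commutes] using DFunLike.congr_fun heq (ofScalars X E g)
  subst hx
  have hψ : ψ₁ = ψ₂ := DFunLike.ext _ _ fun e => by
    simpa using DFunLike.congr_fun heq (constAlgHom X E e)
  rw [hψ]

variable (X E) in
/-- Hausner's description of the character space of `C(X, E)`. -/
noncomputable def characterSpaceHomeomorph : X × characterSpace ℂ E ≃ₜ characterSpace ℂ C(X, E) :=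
  Continuous.homeoOfEquivCompactToT2 (f := Equiv.ofBijective _ ⟨evalCharacter_injective,
    fun φ => by
      obtain ⟨x, ψ, rfl⟩ := exists_eq_evalCharacter φ
      exact ⟨(x, ψ), rfl⟩⟩) continuous_evalCharacter

@[simp]
theorem characterSpaceHomeomorph_apply (p : X × characterSpace ℂ E) :
    characterSpaceHomeomorph X E p = evalCharacter p.1 p.2 := rfl

theorem isDitkinAlgebra (hE : IsDitkinAlgebra E) : IsDitkinAlgebra C(X, E) := by
  intro φ f hφf
  obtain ⟨x, ψ, rfl⟩ := exists_eq_evalCharacter φ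
  rw [evalCharacter_apply] at hφf
  refine Metric.mem_closure_iff.mpr fun ε hε => ?_
  obtain ⟨_, ⟨e, he, rfl⟩, hfe⟩ := Metric.mem_closure_iff.mp (hE ψ (f x) hφf) ε hε
  obtain ⟨g, hg, hgF⟩ := (f - f * constAlgHom X E e).exists_eventually_eq_one_norm_ofScalars_mul_lt
    (x := x) (by simpa [dist_eq_norm] using hfe)
  -- `u` agrees with `e` near `x`, and `f - f * u` is the cut-off of `f - f * e`
  set u : C(X, E) := 1 - ofScalars X E g * constAlgHom X E (1 - e)
  refine ⟨f * u, ⟨u, ?_, rfl⟩, ?_⟩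
  · change ∀ᶠ χ in 𝓝 (characterSpaceHomeomorph X E (x, ψ)), χ u = 0
    rw [← Homeomorph.map_nhds_eq, eventually_map, nhds_prod_eq]
    filter_upwards [hg.prod_mk he] with ⟨y, χ⟩ ⟨hy, hχ⟩
    simp [u, hy, hχ]
  · have : f - f * u = ofScalars X E g * (f - f * constAlgHom X E e) := by
      simp only [u, map_sub, map_one]
      ring
    rwa [dist_eq_norm, this]

end ContinuousMap

theorem separating_linear_bijection_continuousMap_general
    (X : Type*) [TopologicalSpace X] [CompactSpace X] [T2Space X]
    (Y : Type*) [TopologicalSpace Y] [CompactSpace Y] [T2Space Y]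
    (E : Type*) [NormedCommRing E] [NormedAlgebra ℂ E] [CompleteSpace E]
    (F : Type*) [NormedCommRing F] [NormedAlgebra ℂ F] [CompleteSpace F]
    (hEss : IsSemisimple E) (hFss : IsSemisimple F)
    (hE : IsDitkinAlgebra E) (hF : IsDitkinAlgebra F)
    (T : C(X, E) →ₗ[ℂ] C(Y, F)) (hbij : Function.Bijective T)
    (hsep : ∀ f g : C(X, E), f * g = 0 → T f * T g = 0) :
    Continuous T ∧
    (∀ f g : C(X, E), T f * T g = 0 → f * g = 0) ∧
    Nonempty ((X × characterSpace ℂ E) ≃ₜ (Y × characterSpace ℂ F)) := by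
  obtain ⟨hcont, hsymm, ⟨H⟩⟩ := separating_linear_bijection_of_isDitkinAlgebra
    (ContinuousMap.isSemisimple hEss) (ContinuousMap.isDitkinAlgebra hE)
    (ContinuousMap.isSemisimple hFss) (ContinuousMap.isDitkinAlgebra hF) hbij hsep
  exact ⟨hcont, hsymm, ⟨(ContinuousMap.characterSpaceHomeomorph X E).trans
    (H.trans (ContinuousMap.characterSpaceHomeomorph Y F).symm)⟩⟩

/-- Let `X, Y` be (nonempty) compact Hausdorff spaces, `E, F` unital
commutative semisimple Banach algebras that are Ditkin algebras, and
`T : C(X, E) → C(Y, F)` a separating linear bijection. Then `T` is continuous, `T⁻¹` is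
separating, and `X × M(E)` is homeomorphic to `Y × M(F)`. -/
theorem separating_linear_bijection_continuousMap
    (X : Type*) [TopologicalSpace X] [CompactSpace X] [T2Space X] [Nonempty X]
    (Y : Type*) [TopologicalSpace Y] [CompactSpace Y] [T2Space Y] [Nonempty Y]
    (E : Type*) [NormedCommRing E] [NormedAlgebra ℂ E] [CompleteSpace E]
    (F : Type*) [NormedCommRing F] [NormedAlgebra ℂ F] [CompleteSpace F]
    (hEss : IsSemisimple E) (hFss : IsSemisimple F)
    (hE : IsDitkinAlgebra E) (hF : IsDitkinAlgebra F)
    (T : C(X, E) →ₗ[ℂ] C(Y, F)) (hbij : Function.Bijective T)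
    (hsep : ∀ f g : C(X, E), f * g = 0 → T f * T g = 0) :
    Continuous T ∧
    (∀ f g : C(X, E), T f * T g = 0 → f * g = 0) ∧
    Nonempty ((X × characterSpace ℂ E) ≃ₜ (Y × characterSpace ℂ F)) :=
  separating_linear_bijection_continuousMap_general X Y E F hEss hFss hE hF T hbij hsep
end
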